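/- Suppose Z is MCAR. Then for every DAG G on the nodes of the DBN (G₀,P₀): l(G|G₀) ≤ l(G₀|G₀), and equality l(G|G₀) = l(G₀|G₀) implies P_{G|G₀} = P₀, where P_{G|G₀}(x) = ∏_i P₀(X_i = x_i | Pa_i = x_{Pa_i}) is the distribution induced by P₀ on the structure G. -/

import Mathlib

open Finset

/-- The marginal probability of the event "the coordinates in `s` agree with
`x`", under the joint pmf `p` on the product of the finite node state spaces. -/
noncomputable def margin {V : Type*} [Fintype V] [DecidableEq V] {K : V → Type*}
    [∀ i, Fintype (K i)] [∀ i, DecidableEq (K i)]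
    (p : (∀ i, K i) → ℝ) (s : Finset V) (x : ∀ i, K i) : ℝ :=
  ∑ y, if ∀ i ∈ s, y i = x i then p y else 0

/-- The conditional probability `P(X_i = x_i | X_s = x_s)` (with `y/0 = 0`
when the conditioning event has probability zero). -/
noncomputable def condP {V : Type*} [Fintype V] [DecidableEq V] {K : V → Type*}
    [∀ i, Fintype (K i)] [∀ i, DecidableEq (K i)]
    (p : (∀ i, K i) → ℝ) (i : V) (s : Finset V) (x : ∀ i, K i) : ℝ :=
  margin p (insert i s) x / margin p s x

/-- The population node-average log-likelihood of the DAG with parent map `Pa`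
with respect to the true joint distribution `p` (under MCAR missingness the
observed conditional probabilities are the conditionals of `p`):
`l(G) = ∑ i, ∑ x, p x * log P(X_i = x_i | Pa_i = x_{Pa_i})`. -/
noncomputable def nal {V : Type*} [Fintype V] [DecidableEq V] {K : V → Type*}
    [∀ i, Fintype (K i)] [∀ i, DecidableEq (K i)]
    (p : (∀ i, K i) → ℝ) (Pa : V → Finset V) : ℝ :=
  ∑ i, ∑ x, p x * Real.log (condP p i (Pa i) x)

section Aux

variable {V : Type*} [Fintype V] [DecidableEq V] {K : V → Type*}
    [∀ i, Fintype (K i)] [∀ i, DecidableEq (K i)]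

lemma margin_nonneg (p : (∀ i, K i) → ℝ) (hp : ∀ x, 0 ≤ p x) (s : Finset V) (x : ∀ i, K i) :
    0 ≤ margin p s x := by
  unfold margin
  refine Finset.sum_nonneg fun y _ => ?_
  show 0 ≤ if ∀ i ∈ s, y i = x i then p y else 0
  split <;> simp [hp y]

lemma le_margin (p : (∀ i, K i) → ℝ) (hp : ∀ x, 0 ≤ p x) (s : Finset V) (x : ∀ i, K i) :
    p x ≤ margin p s x := by
  unfold margin
  have := Finset.single_le_sum (f := fun y => if ∀ i ∈ s, y i = x i then p y else 0)
    (fun y _ => by show 0 ≤ if ∀ i ∈ s, y i = x i then p y else 0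
                   split <;> simp [hp y]) (Finset.mem_univ x)
  simpa using this

lemma margin_update (p : (∀ i, K i) → ℝ) {s : Finset V} {i : V} (hi : i ∉ s)
    (x : ∀ i, K i) (v : K i) :
    margin p s (Function.update x i v) = margin p s x := by
  unfold margin
  refine Finset.sum_congr rfl fun y _ => ?_
  refine if_congr (forall₂_congr fun j hj => ?_) rfl rfl
  rw [Function.update_of_ne (by rintro rfl; exact hi hj)]

lemma sum_margin_insert (p : (∀ i, K i) → ℝ) {s : Finset V} {i : V} (hi : i ∉ s)
    (x : ∀ i, K i) :
    ∑ v, margin p (insert i s) (Function.update x i v) = margin p s x := by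
  unfold margin
  rw [Finset.sum_comm]
  refine Finset.sum_congr rfl fun y _ => ?_
  have key : ∀ v : K i, (∀ j ∈ insert i s, y j = Function.update x i v j) ↔
      (v = y i ∧ ∀ j ∈ s, y j = x j) := by
    intro v
    constructor
    · intro h
      have h1 := h i (mem_insert_self i s)
      rw [Function.update_self] at h1
      refine ⟨h1.symm, fun j hj => ?_⟩
      have h2 := h j (mem_insert_of_mem hj)
      rwa [Function.update_of_ne (by rintro rfl; exact hi hj)] at h2
    · rintro ⟨rfl, h⟩
      intro j hj
      rcases mem_insert.1 hj with rfl | hjs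
      · rw [Function.update_self]
      · rw [Function.update_of_ne (by rintro rfl; exact hi hjs)]; exact h j hjs
  simp only [key]
  by_cases hC : ∀ j ∈ s, y j = x j
  · rw [if_pos hC]
    have hsimp : ∀ v : K i, (if v = y i ∧ ∀ j ∈ s, y j = x j then p y else 0)
        = if v = y i then p y else 0 := fun v => if_congr (and_iff_left hC) rfl rfl
    simp only [hsimp]
    simp
  · rw [if_neg hC]
    exact Finset.sum_eq_zero fun v _ => if_neg fun hcc => hC hcc.2

lemma condP_nonneg (p : (∀ i, K i) → ℝ) (hp : ∀ x, 0 ≤ p x) (i : V) (s : Finset V)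
    (x : ∀ i, K i) : 0 ≤ condP p i s x :=
  div_nonneg (margin_nonneg p hp _ x) (margin_nonneg p hp _ x)

lemma condP_pos (p : (∀ i, K i) → ℝ) (hp : ∀ x, 0 ≤ p x) {x : ∀ i, K i} (hx : 0 < p x)
    (i : V) (s : Finset V) : 0 < condP p i s x :=
  div_pos (lt_of_lt_of_le hx (le_margin p hp _ x)) (lt_of_lt_of_le hx (le_margin p hp _ x))

lemma condP_update (p : (∀ i, K i) → ℝ) {i k : V} {s : Finset V} (hik : i ∉ insert k s)
    (x : ∀ i, K i) (v : K i) :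
    condP p k s (Function.update x i v) = condP p k s x := by
  unfold condP
  rw [margin_update p hik x v, margin_update p (fun h => hik (mem_insert_of_mem h)) x v]

lemma sum_condP_le_one (p : (∀ i, K i) → ℝ) (hp : ∀ x, 0 ≤ p x) {i : V} {s : Finset V}
    (hi : i ∉ s) (x : ∀ i, K i) :
    ∑ v, condP p i s (Function.update x i v) ≤ 1 := by
  unfold condP
  have h1 : ∀ v : K i, margin p s (Function.update x i v) = margin p s x :=
    fun v => margin_update p hi x v
  simp only [h1]
  rw [← Finset.sum_div, sum_margin_insert p hi x]
  rcases eq_or_lt_of_le (margin_nonneg p hp s x) with h | h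
  · simp [← h]
  · rw [div_self h.ne']

set_option maxHeartbeats 1000000 in
lemma sum_update_eq (i : V) (c : K i) (h : (∀ j, K j) → ℝ) :
    ∑ x, h x = ∑ x, if x i = c then ∑ v, h (Function.update x i v) else 0 := by
  classical
  have step : ∀ v : K i, ∑ x ∈ univ.filter (fun x : ∀ j, K j => x i = c),
      h (Function.update x i v) = ∑ y ∈ univ.filter (fun y : ∀ j, K j => y i = v), h y := by
    intro v
    refine Finset.sum_bij' (fun x _ => Function.update x i v)
      (fun y _ => Function.update y i c) ?_ ?_ ?_ ?_ ?_
    · intro a ha; simp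
    · intro a ha; simp
    · intro a ha
      have hac : a i = c := by simpa using ha
      show Function.update (Function.update a i v) i c = a
      rw [Function.update_idem, ← hac, Function.update_eq_self]
    · intro a ha
      have hav : a i = v := by simpa using ha
      show Function.update (Function.update a i c) i v = a
      rw [Function.update_idem, ← hav, Function.update_eq_self]
    · intro a ha; rfl
  calc ∑ x, h x = ∑ v, ∑ y ∈ univ.filter (fun y : ∀ j, K j => y i = v), h y :=
        (Finset.sum_fiberwise univ (fun x => x i) h).symm
    _ = ∑ v, ∑ x ∈ univ.filter (fun x : ∀ j, K j => x i = c), h (Function.update x i v) := by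
        simp_rw [step]
    _ = ∑ x ∈ univ.filter (fun x : ∀ j, K j => x i = c), ∑ v, h (Function.update x i v) :=
        Finset.sum_comm
    _ = ∑ x, if x i = c then ∑ v, h (Function.update x i v) else 0 :=
        (Finset.sum_filter _ _)

lemma key_le_one (p : (∀ i, K i) → ℝ) (hp : ∀ x, 0 ≤ p x)
    (Pa : V → Finset V) (r : V → ℕ) (hacyc : ∀ i, ∀ j ∈ Pa i, r j < r i) :
    ∀ S : Finset V, ∀ x₀ : ∀ i, K i,
      (∑ x, if ∀ j, j ∉ S → x j = x₀ j then ∏ i ∈ S, condP p i (Pa i) x else 0) ≤ 1 := by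
  intro S
  induction S using Finset.strongInduction with
  | _ S ih =>
  intro x₀
  rcases S.eq_empty_or_nonempty with rfl | hS
  · have e : (∑ x : ∀ j, K j, if ∀ j, j ∉ (∅ : Finset V) → x j = x₀ j
        then ∏ i ∈ (∅ : Finset V), condP p i (Pa i) x else 0)
        = ∑ x : ∀ j, K j, if x = x₀ then 1 else 0 := by
      refine Finset.sum_congr rfl fun x _ => ?_
      rw [Finset.prod_empty]
      refine if_congr ?_ rfl rfl
      simp [funext_iff]
    rw [e]
    simp
  · obtain ⟨i, hiS, hmax⟩ := S.exists_max_image r hS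
    have hiPa : ∀ k ∈ S, i ∉ Pa k := fun k hk hik =>
      lt_irrefl _ (lt_of_lt_of_le (hacyc k i hik) (hmax k hk))
    have hii : i ∉ Pa i := hiPa i hiS
    rw [sum_update_eq i (x₀ i)]
    refine le_trans (Finset.sum_le_sum (g := fun x : ∀ j, K j =>
        if ∀ j, j ∉ S.erase i → x j = x₀ j then ∏ k ∈ S.erase i, condP p k (Pa k) x else 0)
        fun x _ => ?_) (ih (S.erase i) (Finset.erase_ssubset hiS) x₀)
    beta_reduce
    by_cases hxi : x i = x₀ i
    · rw [if_pos hxi]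
      by_cases hC : ∀ j, j ∉ S → x j = x₀ j
      · have hC' : ∀ j, j ∉ S.erase i → x j = x₀ j := by
          intro j hj
          by_cases hji : j = i
          · subst hji; exact hxi
          · exact hC j (fun hjS => hj (Finset.mem_erase.2 ⟨hji, hjS⟩))
        rw [if_pos hC']
        have hFv : ∀ v : K i,
            (if ∀ j, j ∉ S → Function.update x i v j = x₀ j
              then ∏ k ∈ S, condP p k (Pa k) (Function.update x i v) else 0)
            = condP p i (Pa i) (Function.update x i v) * ∏ k ∈ S.erase i, condP p k (Pa k) x := by
          intro v
          have hcond : ∀ j, j ∉ S → Function.update x i v j = x₀ j := by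
            intro j hj
            rw [Function.update_of_ne (by rintro rfl; exact hj hiS)]
            exact hC j hj
          rw [if_pos hcond, ← Finset.mul_prod_erase S _ hiS]
          congr 1
          refine Finset.prod_congr rfl fun k hk => ?_
          have hki : k ≠ i := (Finset.mem_erase.1 hk).1
          refine condP_update p ?_ x v
          intro hmem
          rcases Finset.mem_insert.1 hmem with e | e
          · exact hki e.symm
          · exact hiPa k (Finset.mem_of_mem_erase hk) e
        simp only [hFv]
        rw [← Finset.sum_mul]
        exact mul_le_of_le_one_left
          (Finset.prod_nonneg fun k _ => condP_nonneg p hp k _ x)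
          (sum_condP_le_one p hp hii x)
      · have hz : ∀ v : K i,
            (if ∀ j, j ∉ S → Function.update x i v j = x₀ j
              then ∏ k ∈ S, condP p k (Pa k) (Function.update x i v) else 0) = 0 := by
          intro v
          rw [if_neg]
          intro hcond
          apply hC
          intro j hj
          have h2 := hcond j hj
          rwa [Function.update_of_ne (by rintro rfl; exact hj hiS)] at h2
        simp only [hz, Finset.sum_const_zero]
        split
        · exact Finset.prod_nonneg fun k _ => condP_nonneg p hp k _ x
        · exact le_refl 0
    · rw [if_neg hxi]
      split
      · exact Finset.prod_nonneg fun k _ => condP_nonneg p hp k _ x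
      · exact le_refl 0

lemma sum_prod_condP_le_one (p : (∀ i, K i) → ℝ) (hp : ∀ x, 0 ≤ p x)
    (hsum : ∑ x, p x = 1) (Pa : V → Finset V) (r : V → ℕ)
    (hacyc : ∀ i, ∀ j ∈ Pa i, r j < r i) :
    ∑ x, ∏ i, condP p i (Pa i) x ≤ 1 := by
  have hne : Nonempty (∀ j, K j) := by
    by_contra h
    rw [not_nonempty_iff] at h
    simp at hsum
  obtain ⟨x₀⟩ := hne
  have := key_le_one p hp Pa r hacyc univ x₀
  simpa using this

end Aux

/-- Under MCAR missingness, for the true DBN `(G₀, P₀)` (joint pmf `p`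
factorizing according to `Pa₀`, acyclic via the order `r₀`) and any DAG `G`
(parent map `Pa`, acyclic via the order `r`) on the same nodes:
`l(G|G₀) ≤ l(G₀|G₀)`, and equality implies `P_{G|G₀} = P₀`, where
`P_{G|G₀}(x) = ∏ i, P₀(X_i = x_i | Pa_i = x_{Pa_i})`. -/
theorem stmt_12 {V : Type*} [Fintype V] [DecidableEq V] {K : V → Type*}
    [∀ i, Fintype (K i)] [∀ i, DecidableEq (K i)]
    (p : (∀ i, K i) → ℝ) (hp : ∀ x, 0 ≤ p x) (hsum : ∑ x, p x = 1)
    (Pa₀ Pa : V → Finset V)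
    (r₀ : V → ℕ) (hacyc₀ : ∀ i, ∀ j ∈ Pa₀ i, r₀ j < r₀ i)
    (r : V → ℕ) (hacyc : ∀ i, ∀ j ∈ Pa i, r j < r i)
    (hfact : ∀ x, p x = ∏ i, condP p i (Pa₀ i) x) :
    nal p Pa ≤ nal p Pa₀ ∧
      (nal p Pa = nal p Pa₀ → ∀ x, (∏ i, condP p i (Pa i) x) = p x) := by
  classical
  set q : (∀ i, K i) → ℝ := fun x => ∏ i, condP p i (Pa i) x with hq
  have hq0 : ∀ x, 0 ≤ q x := fun x => Finset.prod_nonneg fun k _ => condP_nonneg p hp k _ x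
  have hqpos : ∀ x, 0 < p x → 0 < q x := fun x hx =>
    Finset.prod_pos fun k _ => condP_pos p hp hx k _
  have hqsum : ∑ x, q x ≤ 1 := sum_prod_condP_le_one p hp hsum Pa r hacyc
  have hnal : ∀ Pa' : V → Finset V,
      nal p Pa' = ∑ x, p x * Real.log (∏ i, condP p i (Pa' i) x) := by
    intro Pa'
    rw [nal, Finset.sum_comm]
    refine Finset.sum_congr rfl fun x _ => ?_
    rw [← Finset.mul_sum]
    rcases (hp x).eq_or_lt with h | h
    · rw [← h]; simp
    · congr 1
      rw [Real.log_prod (fun k _ => (condP_pos p hp h k _).ne')]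
  have hnal₀ : nal p Pa₀ = ∑ x, p x * Real.log (p x) := by
    rw [hnal Pa₀]
    exact Finset.sum_congr rfl fun x _ => by rw [← hfact x]
  have hnalP : nal p Pa = ∑ x, p x * Real.log (q x) := hnal Pa
  have hpt : ∀ x, p x * Real.log (q x) ≤ p x * Real.log (p x) + (q x - p x) := by
    intro x
    rcases (hp x).eq_or_lt with h | h
    · rw [← h]; simpa using hq0 x
    · have hqx := hqpos x h
      have hlog : Real.log (q x / p x) ≤ q x / p x - 1 :=
        Real.log_le_sub_one_of_pos (div_pos hqx h)
      rw [Real.log_div hqx.ne' h.ne'] at hlog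
      have h3 : p x * (Real.log (q x) - Real.log (p x)) ≤ q x - p x := by
        calc p x * (Real.log (q x) - Real.log (p x)) ≤ p x * (q x / p x - 1) :=
              mul_le_mul_of_nonneg_left hlog (hp x)
          _ = q x - p x := by field_simp
      rw [mul_sub] at h3
      linarith
  have sum_le : ∑ x, p x * Real.log (q x) ≤ ∑ x, (p x * Real.log (p x) + (q x - p x)) :=
    Finset.sum_le_sum fun x _ => hpt x
  have hsum2 : ∑ x, (p x * Real.log (p x) + (q x - p x))
      = (∑ x, p x * Real.log (p x)) + (∑ x, q x) - 1 := by
    rw [Finset.sum_add_distrib, Finset.sum_sub_distrib, hsum]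
    ring
  constructor
  · rw [hnalP, hnal₀]
    linarith
  · intro heq x
    have hAB : ∑ x, p x * Real.log (q x) = ∑ x, p x * Real.log (p x) := by
      rw [← hnalP, ← hnal₀, heq]
    have hge : ∑ x, (p x * Real.log (p x) + (q x - p x)) ≤ ∑ x, p x * Real.log (q x) := by
      rw [hAB, hsum2]
      linarith
    have hterm := (Finset.sum_eq_sum_iff_of_le fun x _ => hpt x).1 (le_antisymm sum_le hge)
    have hx := hterm x (Finset.mem_univ x)
    rcases (hp x).eq_or_lt with h | h
    · rw [← h] at hx ⊢
      simp only [zero_mul, zero_add, sub_zero] at hx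
      linarith
    · by_contra hne
      have hne' : q x / p x ≠ 1 := by
        intro h1
        rw [div_eq_one_iff_eq h.ne'] at h1
        exact hne h1
      have hlt : Real.log (q x / p x) < q x / p x - 1 :=
        Real.log_lt_sub_one_of_pos (div_pos (hqpos x h) h) hne'
      rw [Real.log_div (hqpos x h).ne' h.ne'] at hlt
      have h3 : p x * (Real.log (q x) - Real.log (p x)) < q x - p x := by
        calc p x * (Real.log (q x) - Real.log (p x)) < p x * (q x / p x - 1) :=
              (mul_lt_mul_iff_right₀ h).2 hlt
          _ = q x - p x := by field_simp
      rw [mul_sub] at h3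
      linarith
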